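/- arXiv:1310.5032 — 2 statements merged into one kernel-verified Lean document; each statement's English description precedes it below -/
import Mathlib

section
/- FA(run,⊆) ⊆ FA(𝔸'), DFA(run,⊆) ⊆ DFA(𝔸'), CFA(run,⊆) ⊆ CFA(𝔸'), and CDFA(run,⊆) ⊆ CDFA(𝔸'). -/
open Set

/-- A finite automaton used for recognizing ω-words over the alphabet `A`:
a finite type of states, a transition relation, an initial state and an
acceptance table (a set of sets of states). -/
structure OFA (A : Type) : Type 1 where
  Q : Type
  [finQ : Finite Q]
  T : Q → A → Q → Prop
  q0 : Q
  Acc : Set (Set Q)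

attribute [instance] OFA.finQ

namespace OFA

variable {A : Type}

/-- Deterministic automaton: at most one successor per state and letter. -/
def Deterministic (M : OFA A) : Prop :=
  ∀ p a q q', M.T p a q → M.T p a q' → q = q'

/-- Complete automaton: at least one successor per state and letter. -/
def Complete (M : OFA A) : Prop :=
  ∀ p a, ∃ q, M.T p a q

/-- `p` is an initial infinite path of `M` with label `x`. -/
def InitPath (M : OFA A) (p : ℕ → M.Q) (x : ℕ → A) : Prop :=
  p 0 = M.q0 ∧ ∀ i, M.T (p i) (x i) (p (i + 1))

/-- States visited at least once (at a positive index). -/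
def runSet (M : OFA A) (p : ℕ → M.Q) : Set M.Q := {q | ∃ i, 0 < i ∧ p i = q}

/-- States visited infinitely often. -/
def infSet (M : OFA A) (p : ℕ → M.Q) : Set M.Q := {q | ∀ n, ∃ i, n ≤ i ∧ p i = q}

/-- States visited finitely many times but at least once. -/
def finSet (M : OFA A) (p : ℕ → M.Q) : Set M.Q := M.runSet p \ M.infSet p

/-- States visited finitely many times or never. -/
def ninfSet (M : OFA A) (p : ℕ → M.Q) : Set M.Q := (M.infSet p)ᶜ

end OFA

/-- Selector for the set of states associated to a path. -/
inductive CSel | run | inf | fin | ninf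

/-- Selector for the comparison relation with a member of the acceptance table. -/
inductive RSel | meet | sub | eq

def OFA.csel {A : Type} (M : OFA A) : CSel → (ℕ → M.Q) → Set M.Q
  | .run => M.runSet
  | .inf => M.infSet
  | .fin => M.finSet
  | .ninf => M.ninfSet

def RSel.holds {Q : Type} : RSel → Set Q → Set Q → Prop
  | .meet => fun S F => (S ∩ F).Nonempty
  | .sub => fun S F => S ⊆ F
  | .eq => fun S F => S = F

/-- The ω-language accepted by `M` under the condition `(c, r)`. -/
def OFA.Lang {A : Type} (M : OFA A) (c : CSel) (r : RSel) : Set (ℕ → A) :=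
  {x | ∃ p, M.InitPath p x ∧ ∃ F ∈ M.Acc, RSel.holds r (M.csel c p) F}

/-- The ω-language accepted by `M` under the condition 𝔸 : some `F ∈ Acc` with `F ⊆ run p`. -/
def OFA.LangA {A : Type} (M : OFA A) : Set (ℕ → A) :=
  {x | ∃ p, M.InitPath p x ∧ ∃ F ∈ M.Acc, F ⊆ M.runSet p}

/-- The ω-language accepted by `M` under the condition 𝔸' : some `F ∈ Acc` with `F ⊈ run p`. -/
def OFA.LangA' {A : Type} (M : OFA A) : Set (ℕ → A) :=
  {x | ∃ p, M.InitPath p x ∧ ∃ F ∈ M.Acc, ¬ F ⊆ M.runSet p}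

/-- The ω-language accepted by `M` under the condition 𝕃 : some `F ∈ Acc` with `F ⊆ inf p`. -/
def OFA.LangL {A : Type} (M : OFA A) : Set (ℕ → A) :=
  {x | ∃ p, M.InitPath p x ∧ ∃ F ∈ M.Acc, F ⊆ M.infSet p}

/-- The ω-language accepted by `M` under the condition 𝕃' : some `F ∈ Acc` with `F ⊈ inf p`. -/
def OFA.LangL' {A : Type} (M : OFA A) : Set (ℕ → A) :=
  {x | ∃ p, M.InitPath p x ∧ ∃ F ∈ M.Acc, ¬ F ⊆ M.infSet p}

/-- The class of ω-languages of the form `L M` for automata `M` satisfying `P`. -/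
def AutClass (A : Type) (P : OFA A → Prop) (L : (M : OFA A) → Set (ℕ → A)) :
    Set (Set (ℕ → A)) :=
  {X | ∃ M : OFA A, P M ∧ L M = X}

/-- The finite factor `x_i x_{i+1} … x_{j-1}` of the ω-word `x`. -/
def extract {A : Type} (x : ℕ → A) (i j : ℕ) : List A :=
  (List.range (j - i)).map fun k => x (i + k)

/-- The ω-language `V · U^ω`: ω-words of the form `u₀u₁u₂⋯` with `u₀ ∈ V`
and all `uᵢ` (i ≥ 1) nonempty words of `U`, described via cut points. -/
def omegaPiece {A : Type} (V U : Language A) : Set (ℕ → A) :=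
  {x | ∃ c : ℕ → ℕ, (∀ i, c i < c (i + 1)) ∧
    extract x 0 (c 0) ∈ V ∧ ∀ i, extract x (c i) (c (i + 1)) ∈ U}

/-- An ω-language is ω-rational if it is a finite union `⋃ᵢ Vᵢ · Uᵢ^ω`
with all `Vᵢ`, `Uᵢ` rational (regular) languages of finite words. -/
def IsOmegaRat {A : Type} (L : Set (ℕ → A)) : Prop :=
  ∃ (n : ℕ) (V U : Fin n → Language A),
    (∀ i, (V i).IsRegular) ∧ (∀ i, (U i).IsRegular) ∧
    L = ⋃ i, omegaPiece (V i) (U i)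

/-- Countable union of closed sets. -/
def IsFsigmaSet {X : Type*} [TopologicalSpace X] (S : Set X) : Prop :=
  ∃ f : ℕ → Set X, (∀ n, IsClosed (f n)) ∧ S = ⋃ n, f n

/-- Countable intersection of open sets. -/
def IsGdeltaSet {X : Type*} [TopologicalSpace X] (S : Set X) : Prop :=
  ∃ f : ℕ → Set X, (∀ n, IsOpen (f n)) ∧ S = ⋂ n, f n

/-!
A path of `M` is accepted under `(run, ⊆)` exactly when every finite prefix of its run lies in a
member of the table: the run is the increasing union of the prefix sets `visitedUpTo p n`, and
since `M` is finite it equals one of them. The automaton `M.track` therefore follows `M` while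
recording the states visited so far, and drops into the sink `none` as soon as the record is
contained in no member of `M.Acc`. Under `𝔸'` the table `{{none}}` accepts exactly the paths
that never reach the sink. Since the record is updated deterministically, `M.track` is
deterministic or complete whenever `M` is.
-/

namespace OFA

variable {A : Type} {M : OFA A}

def visitedUpTo (M : OFA A) (p : ℕ → M.Q) (n : ℕ) : Set M.Q :=
  {q | ∃ i, 0 < i ∧ i ≤ n ∧ p i = q}

lemma visitedUpTo_zero (p : ℕ → M.Q) : M.visitedUpTo p 0 = ∅ :=
  eq_empty_of_forall_notMem fun _ ⟨i, hi, hi0, _⟩ => by omega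

lemma visitedUpTo_succ (p : ℕ → M.Q) (n : ℕ) :
    M.visitedUpTo p (n + 1) = insert (p (n + 1)) (M.visitedUpTo p n) := by
  ext q
  simp only [visitedUpTo, mem_ofPred_eq, mem_insert_iff, Nat.le_succ_iff]
  constructor
  · rintro ⟨i, hi, hin | rfl, rfl⟩
    exacts [Or.inr ⟨i, hi, hin, rfl⟩, Or.inl rfl]
  · rintro (rfl | ⟨i, hi, hin, rfl⟩)
    exacts [⟨n + 1, n.succ_pos, Or.inr rfl, rfl⟩, ⟨i, hi, Or.inl hin, rfl⟩]

lemma visitedUpTo_mono (p : ℕ → M.Q) : Monotone (M.visitedUpTo p) :=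
  fun _ _ hmn _ ⟨i, hi, him, hq⟩ => ⟨i, hi, him.trans hmn, hq⟩

lemma visitedUpTo_subset_runSet (p : ℕ → M.Q) (n : ℕ) : M.visitedUpTo p n ⊆ M.runSet p :=
  fun _ ⟨i, hi, _, hq⟩ => ⟨i, hi, hq⟩

lemma runSet_subset_iUnion_visitedUpTo (p : ℕ → M.Q) : M.runSet p ⊆ ⋃ n, M.visitedUpTo p n :=
  fun _ ⟨i, hi, hq⟩ => mem_iUnion.2 ⟨i, i, hi, le_rfl, hq⟩

lemma exists_runSet_subset_visitedUpTo (p : ℕ → M.Q) : ∃ n, M.runSet p ⊆ M.visitedUpTo p n := by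
  simpa using (visitedUpTo_mono p).directed_le.exists_mem_subset_of_finset_subset_biUnion
    (s := (M.runSet p).toFinite.toFinset) (by simpa using runSet_subset_iUnion_visitedUpTo p)

lemma exists_runSet_subset_iff (p : ℕ → M.Q) (𝓕 : Set (Set M.Q)) :
    (∃ F ∈ 𝓕, M.runSet p ⊆ F) ↔ ∀ n, ∃ F ∈ 𝓕, M.visitedUpTo p n ⊆ F := by
  refine ⟨fun ⟨F, hF, hrun⟩ n => ⟨F, hF, (visitedUpTo_subset_runSet p n).trans hrun⟩, fun h => ?_⟩
  obtain ⟨n, hn⟩ := exists_runSet_subset_visitedUpTo p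
  obtain ⟨F, hF, hvis⟩ := h n
  exact ⟨F, hF, hn.trans hvis⟩

open Classical in
def track (M : OFA A) : OFA A where
  Q := Option (M.Q × Set M.Q)
  T
    | none, _, s' => s' = none
    | some (q, S), a, s' =>
      if ∃ F ∈ M.Acc, S ⊆ F then ∃ q', M.T q a q' ∧ s' = some (q', insert q' S) else s' = none
  q0 := some (M.q0, ∅)
  Acc := {{none}}

lemma track_T_some_some {q q' : M.Q} {S S' : Set M.Q} {a : A} :
    M.track.T (some (q, S)) a (some (q', S')) ↔
      (∃ F ∈ M.Acc, S ⊆ F) ∧ M.T q a q' ∧ S' = insert q' S := by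
  simp only [track]
  split_ifs with h <;> simp [h]

lemma Deterministic.track (h : M.Deterministic) : M.track.Deterministic := by
  rintro (_ | ⟨q, S⟩) a s s' hs hs'
  · exact hs.trans hs'.symm
  · simp only [OFA.track] at hs hs'
    split_ifs at hs hs'
    · obtain ⟨r, hr, rfl⟩ := hs
      obtain ⟨r', hr', rfl⟩ := hs'
      rw [h q a r r' hr hr']
    · exact hs.trans hs'.symm

lemma Complete.track (h : M.Complete) : M.track.Complete := by
  rintro (_ | ⟨q, S⟩) a
  · exact ⟨none, rfl⟩
  · obtain ⟨q', hq'⟩ := h q a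
    simp only [OFA.track]
    split_ifs
    exacts [⟨_, q', hq', rfl⟩, ⟨none, rfl⟩]

lemma initPath_track {p : ℕ → M.Q} {x : ℕ → A} (hp : M.InitPath p x)
    (h : ∀ n, ∃ F ∈ M.Acc, M.visitedUpTo p n ⊆ F) :
    M.track.InitPath (fun n => some (p n, M.visitedUpTo p n)) x := by
  refine ⟨by simp [track, hp.1, visitedUpTo_zero], fun n => ?_⟩
  exact track_T_some_some.2 ⟨h n, hp.2 n, visitedUpTo_succ p n⟩

lemma exists_initPath_of_initPath_track {p' : ℕ → M.track.Q} {x : ℕ → A}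
    (hp' : M.track.InitPath p' x) (hsink : ∀ n, p' n ≠ none) :
    ∃ p, M.InitPath p x ∧ ∀ n, ∃ F ∈ M.Acc, M.visitedUpTo p n ⊆ F := by
  choose s hs using fun n => Option.ne_none_iff_exists'.1 (hsink n)
  have hstep n := track_T_some_some.1 (hs n ▸ hs (n + 1) ▸ hp'.2 n)
  have hinit : s 0 = (M.q0, ∅) := Option.some_injective _ ((hs 0).symm.trans hp'.1)
  have hrecord n : (s n).2 = M.visitedUpTo (fun n => (s n).1) n := by
    induction n with
    | zero => rw [hinit, visitedUpTo_zero]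
    | succ n ih => rw [(hstep n).2.2, ih, visitedUpTo_succ]
  refine ⟨fun n => (s n).1, ⟨congrArg Prod.fst hinit, fun n => (hstep n).2.1⟩, fun n => ?_⟩
  exact hrecord n ▸ (hstep n).1

theorem langA'_track (M : OFA A) : M.track.LangA' = M.Lang .run .sub := by
  ext x
  simp only [LangA', Lang, csel, RSel.holds, exists_runSet_subset_iff]
  constructor
  · rintro ⟨p', hp', F, rfl, hF⟩
    refine exists_initPath_of_initPath_track hp' fun n hn => hF ?_
    rintro _ rfl
    cases n with
    | zero => simp [hp'.1, track] at hn
    | succ n => exact ⟨n + 1, n.succ_pos, hn⟩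
  · rintro ⟨p, hp, h⟩
    refine ⟨_, initPath_track hp h, {none}, rfl, fun hF => ?_⟩
    obtain ⟨i, -, hi⟩ := hF rfl
    simp at hi

end OFA

lemma autClass_subset {A : Type} {P P' : OFA A → Prop} {L L' : OFA A → Set (ℕ → A)}
    (h : ∀ M, P M → ∃ M', P' M' ∧ L' M' = L M) : AutClass A P L ⊆ AutClass A P' L' := by
  rintro _ ⟨M, hM, rfl⟩
  exact h M hM

theorem stmt_4_general (A : Type) :
    AutClass A (fun _ : OFA A => True) (fun M => M.Lang CSel.run RSel.sub) ⊆ AutClass A (fun _ : OFA A => True) OFA.LangA' ∧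
    AutClass A OFA.Deterministic (fun M => M.Lang CSel.run RSel.sub) ⊆ AutClass A OFA.Deterministic OFA.LangA' ∧
    AutClass A OFA.Complete (fun M => M.Lang CSel.run RSel.sub) ⊆ AutClass A OFA.Complete OFA.LangA' ∧
    AutClass A (fun M : OFA A => M.Deterministic ∧ M.Complete) (fun M => M.Lang CSel.run RSel.sub) ⊆ AutClass A (fun M : OFA A => M.Deterministic ∧ M.Complete) OFA.LangA' :=
  ⟨autClass_subset fun M _ => ⟨M.track, trivial, M.langA'_track⟩,
    autClass_subset fun M hM => ⟨M.track, hM.track, M.langA'_track⟩,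
    autClass_subset fun M hM => ⟨M.track, hM.track, M.langA'_track⟩,
    autClass_subset fun M hM => ⟨M.track, ⟨hM.1.track, hM.2.track⟩, M.langA'_track⟩⟩

theorem stmt_4 (A : Type) [Fintype A] :
    AutClass A (fun _ : OFA A => True) (fun M => M.Lang CSel.run RSel.sub) ⊆ AutClass A (fun _ : OFA A => True) OFA.LangA' ∧
    AutClass A OFA.Deterministic (fun M => M.Lang CSel.run RSel.sub) ⊆ AutClass A OFA.Deterministic OFA.LangA' ∧
    AutClass A OFA.Complete (fun M => M.Lang CSel.run RSel.sub) ⊆ AutClass A OFA.Complete OFA.LangA' ∧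
    AutClass A (fun M : OFA A => M.Deterministic ∧ M.Complete) (fun M => M.Lang CSel.run RSel.sub) ⊆ AutClass A (fun M : OFA A => M.Deterministic ∧ M.Complete) OFA.LangA' :=
  stmt_4_general A
end

section
/- Over the two-letter alphabet Σ = {a,b}, FA(𝕃') is strictly contained in Fσ^R: every language in FA(𝕃') is an ω-rational countable union of closed sets, and there is a language in Fσ^R (for instance b*ab*a(a+b)^ω, the set of ω-words containing at least two occurrences of a) that is not in FA(𝕃'). -/
open Set

/-!
An 𝕃'-run is accepting iff it eventually avoids some state `q` occurring in the acceptance table.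
For fixed `q` and a fixed time after which `q` is avoided, the labels of such runs form a closed
set, because the space of runs is compact. Cutting such a run at the visits of a state `s` seen
infinitely often splits it into a path `q₀ → s` followed by loops `s → s` avoiding `q`, which
exhibits `L_𝕃'(M)` as ω-rational.

Suppose the words with at least two `a`s were `L_𝕃'(M)` for an automaton with `N` states. An
accepting run on `b^N a b^N a b^ω` eventually avoids some `q ∈ F`. Pumping a loop inside either
block of `b`s gives a word with at most one `a`; all its runs are rejecting, so they visit all of
`F`, and hence `q`, infinitely often, so `q` occurs in both blocks. Cutting out the segment between
these two occurrences yields an accepted word with a single `a`.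
-/

open Set Filter

theorem isFsigmaSet_iUnion_of_isClosed {X ι : Type*} [TopologicalSpace X] [Countable ι]
    {s : ι → Set X} (h : ∀ i, IsClosed (s i)) : IsFsigmaSet (⋃ i, s i) := by
  rcases isEmpty_or_nonempty ι with hι | hι
  · exact ⟨fun _ => ∅, fun _ => isClosed_empty, by simp⟩
  · obtain ⟨f, hf⟩ := exists_surjective_nat ι
    exact ⟨s ∘ f, fun n => h (f n), (hf.iUnion_comp s).symm⟩

theorem NFA.isRegular_setOf_mem_evalFrom {α σ : Type*} [Finite σ] (N : NFA α σ) (S : Set σ)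
    (s : σ) : Language.IsRegular {u : List α | s ∈ N.evalFrom S u} := by
  classical
  have := Fintype.ofFinite σ
  refine Language.isRegular_iff.mpr
    ⟨_, inferInstance, { N with start := S, accept := {s} }.toDFA, ?_⟩
  ext u
  rw [NFA.toDFA_correct, NFA.mem_accepts]
  exact ⟨fun ⟨_, hs, h⟩ => mem_singleton_iff.mp hs ▸ h, fun h => ⟨s, rfl, h⟩⟩

theorem Language.isRegular_top {A : Type} : (⊤ : Language A).IsRegular :=
  ⟨Unit, inferInstance, ⟨fun _ _ => (), (), univ⟩, rfl⟩

theorem isOmegaRat_iUnion {A ι : Type} [Finite ι] {V U : ι → Language A}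
    (hV : ∀ i, (V i).IsRegular) (hU : ∀ i, (U i).IsRegular) :
    IsOmegaRat (⋃ i, omegaPiece (V i) (U i)) := by
  obtain ⟨n, ⟨e⟩⟩ := Finite.exists_equiv_fin ι
  exact ⟨n, V ∘ e.symm, U ∘ e.symm, fun _ => hV _, fun _ => hU _,
    (e.symm.surjective.iUnion_comp fun i => omegaPiece (V i) (U i)).symm⟩

section extract

variable {A : Type} (x : ℕ → A)

theorem extract_self (i : ℕ) : extract x i i = [] := by
  simp [extract]

theorem extract_succ {i j : ℕ} (hij : i ≤ j) : extract x i (j + 1) = extract x i j ++ [x j] := by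
  simp only [extract, show j + 1 - i = j - i + 1 by omega, List.range_succ, List.map_append]
  simp [show i + (j - i) = j by omega]

end extract

namespace OFA

variable {A : Type} (M : OFA A)

theorem mem_langL'_iff {x : ℕ → A} :
    x ∈ M.LangL' ↔ ∃ q ∈ ⋃₀ M.Acc, ∃ n, ∃ p, M.InitPath p x ∧ ∀ i, n ≤ i → p i ≠ q := by
  constructor
  · rintro ⟨p, hp, F, hF, hFp⟩
    obtain ⟨q, hqF, hqp⟩ := not_subset.mp hFp
    simp only [infSet, mem_ofPred_eq, not_forall, not_exists, not_and] at hqp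
    obtain ⟨n, hn⟩ := hqp
    exact ⟨q, ⟨F, hF, hqF⟩, n, p, hp, hn⟩
  · rintro ⟨q, ⟨F, hF, hqF⟩, n, p, hp, hn⟩
    exact ⟨p, hp, F, hF, fun hFp => let ⟨i, hi, hpi⟩ := hFp hqF n; hn i hi hpi⟩

section Topology

variable [TopologicalSpace A] [DiscreteTopology A] [TopologicalSpace M.Q] [DiscreteTopology M.Q]

theorem isClosed_setOf_initPath :
    IsClosed {z : (ℕ → M.Q) × (ℕ → A) | M.InitPath z.1 z.2} := by
  simp only [InitPath, ofPred_and, ofPred_forall]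
  refine (isClosed_eq (by fun_prop) continuous_const).inter (isClosed_iInter fun i => ?_)
  exact (isClosed_discrete {t : M.Q × A × M.Q | M.T t.1 t.2.1 t.2.2}).preimage
    (f := fun z : (ℕ → M.Q) × (ℕ → A) => (z.1 i, z.2 i, z.1 (i + 1))) (by fun_prop)

theorem isClosed_setOf_exists_initPath (q : M.Q) (n : ℕ) :
    IsClosed {x : ℕ → A | ∃ p, M.InitPath p x ∧ ∀ i, n ≤ i → p i ≠ q} := by
  have hruns : IsClosed
      {z : (ℕ → M.Q) × (ℕ → A) | M.InitPath z.1 z.2 ∧ ∀ i, n ≤ i → z.1 i ≠ q} := by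
    rw [ofPred_and, ofPred_forall]
    exact M.isClosed_setOf_initPath.inter <| isClosed_iInter fun i =>
      (isClosed_discrete {r : M.Q | n ≤ i → r ≠ q}).preimage
        (f := fun z : (ℕ → M.Q) × (ℕ → A) => z.1 i) (by fun_prop)
  convert isClosedMap_snd_of_compactSpace _ hruns using 1
  ext x
  exact ⟨fun ⟨p, hp⟩ => ⟨(p, x), hp, rfl⟩, fun ⟨⟨p, _⟩, hp, hx⟩ => hx ▸ ⟨p, hp⟩⟩

end Topology

theorem isFsigmaSet_langL' [TopologicalSpace A] [DiscreteTopology A] :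
    IsFsigmaSet M.LangL' := by
  let : TopologicalSpace M.Q := ⊥
  have : DiscreteTopology M.Q := ⟨rfl⟩
  have hL : M.LangL' = ⋃ z : ↥(⋃₀ M.Acc) × ℕ,
      {x | ∃ p, M.InitPath p x ∧ ∀ i, z.2 ≤ i → p i ≠ z.1} := by
    ext x
    simp only [mem_langL'_iff, mem_iUnion, mem_ofPred_eq, Prod.exists, Subtype.exists,
      exists_prop]
  rw [hL]
  exact isFsigmaSet_iUnion_of_isClosed fun z => M.isClosed_setOf_exists_initPath z.1 z.2

def toNFA (R : Set M.Q) : NFA A M.Q where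
  step r a := {s | s ∈ R ∧ M.T r a s}
  start := {M.q0}
  accept := univ

def segLang (R : Set M.Q) (q₁ q₂ : M.Q) : Language A :=
  {u | q₂ ∈ (M.toNFA R).evalFrom {q₁} u}

theorem mem_segLang {R : Set M.Q} {q₁ q₂ : M.Q} {u : List A} :
    u ∈ M.segLang R q₁ q₂ ↔ q₂ ∈ (M.toNFA R).evalFrom {q₁} u :=
  Iff.rfl

theorem isRegular_segLang (R : Set M.Q) (q₁ q₂ : M.Q) : (M.segLang R q₁ q₂).IsRegular :=
  (M.toNFA R).isRegular_setOf_mem_evalFrom {q₁} q₂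

def IsRunOn (R : Set M.Q) (p : ℕ → M.Q) (x : ℕ → A) (i j : ℕ) : Prop :=
  (∀ t, i ≤ t → t < j → M.T (p t) (x t) (p (t + 1))) ∧ ∀ t, i < t → t ≤ j → p t ∈ R

section IsRunOn

variable {M} {R : Set M.Q} {p : ℕ → M.Q} {x : ℕ → A} {i j : ℕ}

theorem InitPath.isRunOn (hp : M.InitPath p x) (hR : ∀ t, i < t → t ≤ j → p t ∈ R) :
    M.IsRunOn R p x i j :=
  ⟨fun t _ _ => hp.2 t, hR⟩

theorem IsRunOn.mono {R' : Set M.Q} (h : M.IsRunOn R p x i j) (hR : R ⊆ R') :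
    M.IsRunOn R' p x i j :=
  ⟨h.1, fun t ht ht' => hR (h.2 t ht ht')⟩

theorem IsRunOn.congr {p' : ℕ → M.Q} (h : M.IsRunOn R p x i j)
    (hpp' : ∀ t, i ≤ t → t ≤ j → p t = p' t) : M.IsRunOn R p' x i j :=
  ⟨fun t ht ht' => hpp' t ht ht'.le ▸ hpp' (t + 1) (by omega) ht' ▸ h.1 t ht ht',
    fun t ht ht' => hpp' t ht.le ht' ▸ h.2 t ht ht'⟩

theorem IsRunOn.trans {k : ℕ} (h₁ : M.IsRunOn R p x i j) (h₂ : M.IsRunOn R p x j k) :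
    M.IsRunOn R p x i k := by
  refine ⟨fun t ht ht' => ?_, fun t ht ht' => ?_⟩
  · by_cases htj : t < j
    · exact h₁.1 t ht htj
    · exact h₂.1 t (by omega) ht'
  · by_cases htj : t ≤ j
    · exact h₁.2 t ht htj
    · exact h₂.2 t (by omega) ht'

theorem IsRunOn.extract_mem_segLang (h : M.IsRunOn R p x i j) (hij : i ≤ j) :
    extract x i j ∈ M.segLang R (p i) (p j) := by
  induction j, hij using Nat.le_induction with
  | base => simp [mem_segLang, extract_self]
  | succ j hij ih =>
    rw [mem_segLang, extract_succ x hij, NFA.evalFrom_append, NFA.evalFrom_singleton,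
      NFA.mem_stepSet]
    exact ⟨p j, ih ⟨fun t ht _ => h.1 t ht (by omega), fun t ht _ => h.2 t ht (by omega)⟩,
      h.2 (j + 1) (by omega) le_rfl, h.1 j hij (by omega)⟩

theorem exists_isRunOn_of_extract_mem_segLang {q₁ q₂ : M.Q}
    (h : extract x i j ∈ M.segLang R q₁ q₂) (hij : i ≤ j) :
    ∃ p, p i = q₁ ∧ p j = q₂ ∧ M.IsRunOn R p x i j := by
  induction j, hij using Nat.le_induction generalizing q₂ with
  | base =>
    rw [mem_segLang, extract_self, NFA.evalFrom_nil, mem_singleton_iff] at h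
    exact ⟨fun _ => q₁, rfl, h.symm, fun t ht ht' => by omega, fun t ht ht' => by omega⟩
  | succ j hij ih =>
    rw [mem_segLang, extract_succ x hij, NFA.evalFrom_append, NFA.evalFrom_singleton,
      NFA.mem_stepSet] at h
    obtain ⟨r, hr, hq₂R, hT⟩ := h
    obtain ⟨p, hpi, hpj, hrun⟩ := ih hr
    refine ⟨Function.update p (j + 1) q₂, by rw [Function.update_of_ne (by omega), hpi],
      by simp, fun t ht ht' => ?_, fun t ht ht' => ?_⟩
    · rw [Function.update_of_ne (by omega)]
      rcases (Nat.lt_succ_iff.mp ht').eq_or_lt with rfl | htj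
      · simpa [hpj] using hT
      · rw [Function.update_of_ne (by omega)]
        exact hrun.1 t ht htj
    · rcases ht'.eq_or_lt with rfl | htj
      · simpa using hq₂R
      · rw [Function.update_of_ne htj.ne]
        exact hrun.2 t ht (by omega)

end IsRunOn

end OFA

theorem diag_eq_of_forall_succ_eq {β : Type*} {ρ : ℕ → ℕ → β} {c : ℕ → ℕ} (hc : StrictMono c)
    (h : ∀ k t, t ≤ c k → ρ (k + 1) t = ρ k t) {k t : ℕ} (ht : t ≤ c k) : ρ t t = ρ k t := by
  have hstable : ∀ k k', k ≤ k' → t ≤ c k → ρ k' t = ρ k t := by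
    intro k k' hkk' ht
    induction k', hkk' using Nat.le_induction with
    | base => rfl
    | succ k' hkk' ih => rw [h k' t (ht.trans (hc.monotone hkk')), ih]
  rcases le_total k t with hkt | htk
  · exact hstable k t hkt ht
  · exact (hstable t k htk hc.le_apply).symm

namespace OFA

variable {A : Type} {M : OFA A} {R : Set M.Q} {x : ℕ → A} {s : M.Q}

theorem mem_omegaPiece_of_initPath {p : ℕ → M.Q} (hp : M.InitPath p x) (hs : s ∈ M.infSet p)
    (hR : ∀ᶠ t in atTop, p t ∈ R) :
    x ∈ omegaPiece (M.segLang univ M.q0 s) (M.segLang R s s) := by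
  obtain ⟨n, hn⟩ := eventually_atTop.mp hR
  obtain ⟨c, hc, hcs⟩ := extraction_of_frequently_atTop
    ((frequently_atTop.mpr hs).and_eventually (eventually_ge_atTop n))
  refine ⟨c, fun k => hc k.lt_succ_self, ?_, fun k => ?_⟩
  · have := (hp.isRunOn (R := univ) (i := 0) (j := c 0) fun _ _ _ => mem_univ _)
      |>.extract_mem_segLang (Nat.zero_le _)
    rwa [hp.1, (hcs 0).1] at this
  · have := (hp.isRunOn (R := R) (i := c k) (j := c (k + 1)) fun t ht _ =>
      hn t ((hcs k).2.trans ht.le))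
      |>.extract_mem_segLang (hc k.lt_succ_self).le
    rwa [(hcs k).1, (hcs (k + 1)).1] at this

/-- `ρ k` is a run along the prefix and the first `k` loops, `ρ (k + 1)` extends `ρ k`, and the
infinite run is their diagonal. -/
theorem exists_initPath_of_mem_omegaPiece
    (h : x ∈ omegaPiece (M.segLang univ M.q0 s) (M.segLang R s s)) :
    ∃ p, M.InitPath p x ∧ ∀ᶠ t in atTop, p t ∈ R := by
  obtain ⟨c, hc, hpre, hloop⟩ := h
  have hcm : StrictMono c := strictMono_nat_of_lt_succ hc
  obtain ⟨ρ₀, hρ₀0, hρ₀c, hρ₀run⟩ := exists_isRunOn_of_extract_mem_segLang hpre (Nat.zero_le _)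
  choose π hπs hπe hπrun using fun k => exists_isRunOn_of_extract_mem_segLang (hloop k) (hc k).le
  let ρ : ℕ → ℕ → M.Q := fun k => Nat.rec ρ₀ (fun k ρk t => if t ≤ c k then ρk t else π k t) k
  have hρ_succ : ∀ k t, t ≤ c k → ρ (k + 1) t = ρ k t := fun k t ht => if_pos ht
  have hρ : ∀ k, ρ k 0 = M.q0 ∧ ρ k (c k) = s ∧ M.IsRunOn univ (ρ k) x 0 (c k) ∧
      M.IsRunOn R (ρ k) x (c 0) (c k) := by
    intro k
    induction k with
    | zero => exact ⟨hρ₀0, hρ₀c, hρ₀run, fun t ht ht' => by omega, fun t ht ht' => by omega⟩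
    | succ k ih =>
      obtain ⟨h0, hs, hrun, hrunR⟩ := ih
      have hagree : ∀ t, 0 ≤ t → t ≤ c k → ρ k t = ρ (k + 1) t :=
        fun t _ ht => (hρ_succ k t ht).symm
      have hπ : M.IsRunOn R (ρ (k + 1)) x (c k) (c (k + 1)) := (hπrun k).congr fun t ht _ => by
        rcases ht.eq_or_lt with rfl | ht
        · rw [hρ_succ k _ le_rfl, hs, hπs]
        · exact (if_neg (not_le.mpr ht)).symm
      exact ⟨(hρ_succ k 0 (Nat.zero_le _)).trans h0, (if_neg (not_le.mpr (hc k))).trans (hπe k),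
        (hrun.congr hagree).trans (hπ.mono (subset_univ R)),
        (hrunR.congr fun t _ ht => hagree t (Nat.zero_le t) ht).trans hπ⟩
  refine ⟨fun t => ρ t t, ⟨(hρ 0).1, fun t => ?_⟩, eventually_atTop.mpr ⟨c 0 + 1, fun t ht => ?_⟩⟩
  · have hlt : t < c (t + 1) := hcm.le_apply.trans_lt (hcm t.lt_succ_self)
    show M.T (ρ t t) (x t) (ρ (t + 1) (t + 1))
    rw [diag_eq_of_forall_succ_eq hcm hρ_succ hlt.le]
    exact (hρ (t + 1)).2.2.1.1 t (Nat.zero_le t) hlt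
  · exact (hρ t).2.2.2.2 t (by omega) hcm.le_apply

variable (M)

theorem langL'_eq_iUnion_omegaPiece : M.LangL' = ⋃ z : ↥(⋃₀ M.Acc) × M.Q,
    omegaPiece (M.segLang univ M.q0 z.2) (M.segLang {z.1.1}ᶜ z.2 z.2) := by
  ext x
  simp only [mem_iUnion, Prod.exists, Subtype.exists]
  constructor
  · intro hx
    obtain ⟨q, hq, n, p, hp, hn⟩ := M.mem_langL'_iff.mp hx
    obtain ⟨s, hs⟩ := frequently_exists.mp
      (Frequently.of_forall (f := atTop) fun t => (⟨p t, rfl⟩ : ∃ s, p t = s))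
    exact ⟨q, hq, s, mem_omegaPiece_of_initPath hp (frequently_atTop.mp hs)
      (eventually_atTop.mpr ⟨n, hn⟩)⟩
  · rintro ⟨q, hq, s, hx⟩
    obtain ⟨p, hp, hpq⟩ := exists_initPath_of_mem_omegaPiece hx
    obtain ⟨n, hn⟩ := eventually_atTop.mp hpq
    exact M.mem_langL'_iff.mpr ⟨q, hq, n, p, hp, hn⟩

theorem isOmegaRat_langL' : IsOmegaRat M.LangL' :=
  M.langL'_eq_iUnion_omegaPiece ▸
    isOmegaRat_iUnion (fun _ => M.isRegular_segLang _ _ _) fun _ => M.isRegular_segLang _ _ _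

end OFA

def twoTrues : Set (ℕ → Bool) := {x | ∃ i j, i < j ∧ x i = true ∧ x j = true}

theorem isFsigmaSet_twoTrues : IsFsigmaSet twoTrues := by
  have h : twoTrues = ⋃ z : {z : ℕ × ℕ // z.1 < z.2},
      {x : ℕ → Bool | x z.1.1 = true} ∩ {x | x z.1.2 = true} := by
    ext x
    simp only [mem_iUnion]
    exact ⟨fun ⟨i, j, hij, hi, hj⟩ => ⟨⟨(i, j), hij⟩, hi, hj⟩,
      fun ⟨⟨(i, j), hij⟩, hi, hj⟩ => ⟨i, j, hij, hi, hj⟩⟩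
  rw [h]
  exact isFsigmaSet_iUnion_of_isClosed fun z =>
    (isClosed_eq (continuous_apply _) continuous_const).inter
      (isClosed_eq (continuous_apply _) continuous_const)

def countTwoTruesDFA : DFA Bool (Fin 3) where
  step s b := if b then ⟨min (s + 1) 2, by omega⟩ else s
  start := 0
  accept := {2}

theorem countTwoTruesDFA_evalFrom (s : Fin 3) (u : List Bool) :
    (countTwoTruesDFA.evalFrom s u : ℕ) = min (s + u.count true) 2 := by
  induction u generalizing s with
  | nil => simp; omega
  | cons b u ih =>
    rw [DFA.evalFrom_cons, ih]
    cases b <;> simp [countTwoTruesDFA]; omega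

theorem isRegular_two_le_count_true :
    Language.IsRegular {u : List Bool | 2 ≤ u.count true} := by
  refine ⟨Fin 3, inferInstance, countTwoTruesDFA, ?_⟩
  ext u
  show countTwoTruesDFA.evalFrom 0 u ∈ ({2} : Set (Fin 3)) ↔ 2 ≤ u.count true
  rw [mem_singleton_iff, ← Fin.val_inj, countTwoTruesDFA_evalFrom]
  simp only [Fin.val_zero, Fin.val_two, zero_add]
  omega

theorem Nat.two_le_count_iff {P : ℕ → Prop} [DecidablePred P] {n : ℕ} :
    2 ≤ Nat.count P n ↔ ∃ i j, i < j ∧ j < n ∧ P i ∧ P j := by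
  constructor
  · intro h
    rw [Nat.count_eq_card_filter_range] at h
    obtain ⟨a, ha, b, hb, hab⟩ := Finset.one_lt_card.mp h
    simp only [Finset.mem_filter, Finset.mem_range] at ha hb
    rcases lt_or_gt_of_ne hab with h | h
    · exact ⟨a, b, h, hb.1, ha.2, hb.2⟩
    · exact ⟨b, a, h, ha.1, hb.2, ha.2⟩
  · rintro ⟨i, j, hij, hjn, hi, hj⟩
    have := Nat.count_strict_mono hi hij
    have := Nat.count_strict_mono hj hjn
    omega

theorem count_true_extract (x : ℕ → Bool) (n : ℕ) :
    (extract x 0 n).count true = Nat.count (fun i => x i = true) n := by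
  induction n with
  | zero => simp [extract_self]
  | succ n ih =>
    rw [extract_succ x (Nat.zero_le n), List.count_append, ih, Nat.count_succ]
    cases x n <;> rfl

theorem isOmegaRat_twoTrues : IsOmegaRat twoTrues := by
  refine ⟨1, fun _ => {u | 2 ≤ u.count true}, fun _ => ⊤, fun _ => isRegular_two_le_count_true,
    fun _ => Language.isRegular_top, ?_⟩
  ext x
  simp only [iUnion_const]
  constructor
  · rintro ⟨i, j, hij, hi, hj⟩
    refine ⟨fun k => j + 1 + k, fun k => by dsimp only; omega, ?_, fun _ => trivial⟩
    show 2 ≤ (extract x 0 (j + 1 + 0)).count true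
    rw [count_true_extract, Nat.two_le_count_iff]
    exact ⟨i, j, hij, by omega, hi, hj⟩
  · rintro ⟨c, -, hc, -⟩
    have hc : 2 ≤ (extract x 0 (c 0)).count true := hc
    rw [count_true_extract] at hc
    obtain ⟨i, j, hij, -, hi, hj⟩ := Nat.two_le_count_iff.mp hc
    exact ⟨i, j, hij, hi, hj⟩

theorem exists_lt_le_add_card_map_eq {Q : Type} [Finite Q] (p : ℕ → Q) (m : ℕ) :
    ∃ k l, m ≤ k ∧ k < l ∧ l ≤ m + Nat.card Q ∧ p k = p l := by
  have := Fintype.ofFinite Q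
  obtain ⟨u, v, huv, he⟩ := Fintype.exists_ne_map_eq_of_card_lt
    (fun t : Fin (Nat.card Q + 1) => p (m + t)) (by simp [Nat.card_eq_fintype_card])
  rcases lt_or_gt_of_ne (Fin.val_ne_of_ne huv) with h | h
  · exact ⟨m + u, m + v, by omega, by omega, by omega, he⟩
  · exact ⟨m + v, m + u, by omega, by omega, by omega, he.symm⟩

/-- Runs through `0, 1, …, l - 1` and then cycles through `k, …, l - 1` forever. -/
def loopIdx (k l : ℕ) : ℕ → ℕ
  | 0 => 0
  | t + 1 => if loopIdx k l t + 1 = l then k else loopIdx k l t + 1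

section loopIdx

variable {k l : ℕ}

theorem loopIdx_succ (t : ℕ) :
    loopIdx k l (t + 1) = if loopIdx k l t + 1 = l then k else loopIdx k l t + 1 := rfl

theorem loopIdx_lt (hkl : k < l) (t : ℕ) : loopIdx k l t < l := by
  induction t with
  | zero => exact Nat.zero_lt_of_lt hkl
  | succ t ih => rw [loopIdx_succ]; split_ifs <;> omega

theorem loopIdx_of_le (hkl : k < l) {t : ℕ} (ht : t ≤ k) : loopIdx k l t = t := by
  induction t with
  | zero => rfl
  | succ t ih => rw [loopIdx_succ, ih (by omega)]; split_ifs <;> omega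

theorem le_loopIdx (hkl : k < l) {t : ℕ} (ht : k ≤ t) : k ≤ loopIdx k l t := by
  induction t, ht using Nat.le_induction with
  | base => exact (loopIdx_of_le hkl le_rfl).ge
  | succ t _ ih => rw [loopIdx_succ]; split_ifs <;> omega

end loopIdx

namespace OFA

section reindex

variable {A : Type} {M : OFA A} {p : ℕ → M.Q} {x : ℕ → A}

theorem infSet_comp_subset {f : ℕ → ℕ} (hf : ∀ t, t ≤ f t) : M.infSet (p ∘ f) ⊆ M.infSet p :=
  fun _ hq n =>
    let ⟨i, hi, hpi⟩ := hq n
    ⟨f i, hi.trans (hf i), hpi⟩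

theorem InitPath.reindex (h : M.InitPath p x) {f : ℕ → ℕ} (h0 : p (f 0) = p 0)
    (hf : ∀ t, p (f (t + 1)) = p (f t + 1)) : M.InitPath (p ∘ f) (x ∘ f) :=
  ⟨h0.trans h.1, fun t => by simpa only [Function.comp, hf t] using h.2 (f t)⟩

theorem InitPath.loop (h : M.InitPath p x) {k l : ℕ} (he : p k = p l) :
    M.InitPath (p ∘ loopIdx k l) (x ∘ loopIdx k l) :=
  h.reindex rfl fun t => by rw [loopIdx_succ]; split_ifs with h' <;> simp [h', he]

theorem InitPath.skip (h : M.InitPath p x) {i j : ℕ} (hij : i ≤ j) (he : p i = p j) :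
    M.InitPath (p ∘ fun t => if t < i then t else t + (j - i))
      (x ∘ fun t => if t < i then t else t + (j - i)) := by
  refine h.reindex ?_ fun t => ?_
  · split_ifs with h0
    · rfl
    · rw [show 0 + (j - i) = j by omega, ← he, show i = 0 by omega]
  · by_cases h1 : t + 1 < i
    · simp [h1, show t < i by omega]
    by_cases h2 : t < i
    · simp only [h1, h2, if_false, if_true]
      rw [show t + 1 + (j - i) = j by omega, ← he, show t + 1 = i by omega]
    · simp only [h1, h2, if_false]
      congr 1
      omega

end reindex

variable {M : OFA Bool}

theorem subset_infSet_of_langL'_eq_twoTrues (hM : M.LangL' = twoTrues) {ρ : ℕ → M.Q}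
    {y : ℕ → Bool} (hρ : M.InitPath ρ y) (hy : ∀ i j, y i = true → y j = true → i = j)
    {F : Set M.Q} (hF : F ∈ M.Acc) : F ⊆ M.infSet ρ := by
  by_contra hFρ
  obtain ⟨i, j, hij, hi, hj⟩ : y ∈ twoTrues := hM ▸ ⟨ρ, hρ, F, hF, hFρ⟩
  exact hij.ne (hy i j hi hj)

theorem exists_eq_in_window_of_langL'_eq_twoTrues (hM : M.LangL' = twoTrues) {p : ℕ → M.Q}
    {x : ℕ → Bool} (hp : M.InitPath p x) {F : Set M.Q} (hF : F ∈ M.Acc) {q : M.Q} (hq : q ∈ F)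
    {m : ℕ} (hwin : ∀ t, m ≤ t → t < m + Nat.card M.Q → x t = false)
    (hpre : ∀ i j, i < m → j < m → x i = true → x j = true → i = j) :
    ∃ t, m ≤ t ∧ t < m + Nat.card M.Q ∧ p t = q := by
  obtain ⟨k, l, hmk, hkl, hlm, he⟩ := exists_lt_le_add_card_map_eq p m
  have htrue : ∀ t, x (loopIdx k l t) = true → t < m ∧ loopIdx k l t = t := by
    intro t ht
    have htk : t < k := by
      by_contra htk
      have := le_loopIdx hkl (not_lt.mp htk)
      have := loopIdx_lt hkl t
      simp [hwin (loopIdx k l t) (by omega) (by omega)] at ht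
    rw [loopIdx_of_le hkl htk.le] at ht ⊢
    refine ⟨?_, rfl⟩
    by_contra hmt
    simp [hwin t (by omega) (by omega)] at ht
  have hone : ∀ i j, x (loopIdx k l i) = true → x (loopIdx k l j) = true → i = j :=
    fun i j hi hj =>
      hpre i j (htrue i hi).1 (htrue j hj).1 ((htrue i hi).2 ▸ hi) ((htrue j hj).2 ▸ hj)
  obtain ⟨t, hkt, hpt⟩ := subset_infSet_of_langL'_eq_twoTrues hM (hp.loop he) hone hF hq k
  have := le_loopIdx hkl hkt
  have := loopIdx_lt hkl t
  exact ⟨loopIdx k l t, by omega, by omega, hpt⟩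

theorem langL'_ne_twoTrues (M : OFA Bool) : M.LangL' ≠ twoTrues := by
  intro hM
  set N := Nat.card M.Q
  set x : ℕ → Bool := fun t => decide (t = N ∨ t = 2 * N + 1)
  have hx : ∀ t, x t = true ↔ t = N ∨ t = 2 * N + 1 := fun t => decide_eq_true_iff
  obtain ⟨p, hp, F, hF, hFp⟩ : x ∈ M.LangL' :=
    hM ▸ ⟨N, 2 * N + 1, by omega, by simp [x], by simp [x]⟩
  obtain ⟨q, hqF, hqp⟩ := not_subset.mp hFp
  obtain ⟨t₁, -, ht₁, hpt₁⟩ := exists_eq_in_window_of_langL'_eq_twoTrues hM hp hF hqF (m := 0)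
    (fun t _ ht => by simp [x]; omega) (fun i j hi => by omega)
  obtain ⟨t₂, ht₂, -, hpt₂⟩ := exists_eq_in_window_of_langL'_eq_twoTrues hM hp hF hqF
    (m := N + 1) (fun t ht ht' => by simp [x]; omega)
    (fun i j hi hj hxi hxj => by rw [hx] at hxi hxj; omega)
  have hskip := hp.skip (by omega : t₁ ≤ t₂) (hpt₁.trans hpt₂.symm)
  refine hqp (infSet_comp_subset (fun t => ?_) <|
    subset_infSet_of_langL'_eq_twoTrues hM hskip (fun i j hi hj => ?_) hF hqF)
  · split_ifs <;> omega
  · simp only [Function.comp, hx] at hi hj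
    split_ifs at hi hj <;> omega

end OFA

/-- Over the alphabet `Bool` we take `a := true` and `b := false`. -/
theorem stmt_15 :
    (∀ L ∈ AutClass Bool (fun _ : OFA Bool => True) OFA.LangL', IsFsigmaSet L ∧ IsOmegaRat L) ∧
    (IsFsigmaSet {x : ℕ → Bool | ∃ i j, i < j ∧ x i = true ∧ x j = true} ∧ IsOmegaRat {x : ℕ → Bool | ∃ i j, i < j ∧ x i = true ∧ x j = true}) ∧
    {x : ℕ → Bool | ∃ i j, i < j ∧ x i = true ∧ x j = true} ∉ AutClass Bool (fun _ : OFA Bool => True) OFA.LangL' := by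
  refine ⟨?_, ⟨isFsigmaSet_twoTrues, isOmegaRat_twoTrues⟩, ?_⟩
  · rintro L ⟨M, -, rfl⟩
    exact ⟨M.isFsigmaSet_langL', M.isOmegaRat_langL'⟩
  · rintro ⟨M, -, hM⟩
    exact M.langL'_ne_twoTrues hM
end
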